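/- With H, B, ζ, ζ̄ as above, the map γ̄ : H/B⁺H → H defined by γ̄(π(h)) = Σ S(h₍₁₎)·ι(ζ(h₍₂₎)) is well-defined (i.e. γ̄(π(ι(b)h)) = ε(b)γ̄(π(h)) for all b ∈ B, h ∈ H) and is the convolution inverse of γ : π(h) ↦ Σ ι(ζ̄(h₍₁₎))h₍₂₎, in the sense that Σ γ(x₍₁₎)γ̄(x₍₂₎) = ε(x)1_H = Σ γ̄(x₍₁₎)γ(x₍₂₎) for all x ∈ H/B⁺H. -/

import Mathlib

/-!
STATEMENT 1: With H, B, ζ, ζ̄ as in Statement 0, the map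
γ̄ : H/B⁺H → H, π(h) ↦ Σ S(h₍₁₎)·ι(ζ(h₍₂₎)) is well-defined
(γ̄(π(ι(b)h)) = ε(b)γ̄(π(h))) and is the convolution inverse of
γ : π(h) ↦ Σ ι(ζ̄(h₍₁₎))h₍₂₎, i.e. Σ γ(x₍₁₎)γ̄(x₍₂₎) = ε(x)1 = Σ γ̄(x₍₁₎)γ(x₍₂₎)
for all x ∈ H/B⁺H.  The quotient H/B⁺H is modelled by an abstract coalgebra C
together with a surjective coalgebra map π : H → C whose kernel is the span of B⁺H;
well-definedness is expressed as the existence of γ, γ̄ : C → H factoring the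
corresponding maps on H through π.
-/

open TensorProduct

noncomputable def convMap (k : Type*) {H M : Type*} [CommSemiring k]
    [AddCommMonoid H] [Module k H] [Coalgebra k H] [Semiring M] [Algebra k M]
    (f g : H →ₗ[k] M) : H →ₗ[k] M :=
  LinearMap.mul' k M ∘ₗ TensorProduct.map f g ∘ₗ Coalgebra.comul

/-!
Work in the convolution algebra `Hom(H, H)` with `f = ι ∘ ζ` and `f̄ = ι ∘ ζ̄`, so that
`f * f̄ = 1 = f̄ * f` and `S * id = 1 = id * S`. On `H` the maps are `γ ∘ π = f̄ * id` and
`γ̄ ∘ π = S * f`, and associativity gives `(f̄ * id) * (S * f) = f̄ * f = 1` and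
`(S * f) * (f̄ * id) = S * id = 1`.

Both maps descend to `H/B⁺H` by one criterion: if `p * q = 1` and `q`, `q * F` are left
`B`-linear, then `F (b h) = ε(b) F(h)` for `b ∈ B`. Write `Δb = Σ b' ⊗ b''` with `b'' ∈ B`
(the coideal property) and let `L_x` be left multiplication by `x`. Since `Δ(b h) = Δb Δh`,
`F ∘ L_b = (p * (q * F)) ∘ L_b = Σ (p ∘ L_b') * ((q * F) ∘ L_b'')`
`        = Σ (p ∘ L_b') * (q ∘ L_b'') * F = ((p * q) ∘ L_b) * F = ε(b) F`.
Take `(p, q, F) = (S, id, S * f)` and `(p, q, F) = (f̄, f, f̄ * id)`.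
-/

open WithConv Coalgebra LinearMap

namespace LinearMap

section Coalgebra

variable {k C A : Type*} [CommSemiring k] [AddCommMonoid C] [Module k C] [Coalgebra k C]
  [Semiring A] [Algebra k A]

lemma mulLeft_comp_convMul (y : A) (f g : WithConv (C →ₗ[k] A)) :
    toConv (mulLeft k y ∘ₗ (f * g).ofConv) = toConv (mulLeft k y ∘ₗ f.ofConv) * g := by
  ext c
  simp [(ℛ k c).convMul_apply, mul_assoc]

lemma algHom_comp_convMul_eq_one {A' : Type*} [Semiring A'] [Algebra k A'] (φ : A →ₐ[k] A')
    {f g : WithConv (C →ₗ[k] A)} (h : f * g = 1) :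
    toConv (φ.toLinearMap ∘ₗ f.ofConv) * toConv (φ.toLinearMap ∘ₗ g.ofConv) = 1 := by
  rw [← toConv_ofConv (_ * _), ← algHom_comp_convMul_distrib, h]
  ext c
  simp

lemma convMul_eq_one_of_comp_coalgHom {D : Type*} [AddCommMonoid D] [Module k D]
    [Coalgebra k D] (π : D →ₗc[k] C) (hπ : Function.Surjective π) {f g : C →ₗ[k] A}
    (h : toConv (f ∘ₗ π.toLinearMap) * toConv (g ∘ₗ π.toLinearMap) = 1) :
    toConv f * toConv g = 1 := by
  refine WithConv.ext <| (cancel_right (g := π.toLinearMap) hπ).1 ?_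
  rw [convMul_comp_coalgHom_distrib, ofConv_toConv, ofConv_toConv, h]
  ext d
  simp [CoalgHomClass.counit_comp_apply]

end Coalgebra

section Bialgebra

variable {k H A : Type*} [CommSemiring k] [Semiring H] [Bialgebra k H] [Semiring A]
  [Algebra k A]

lemma convMul_comp_mulLeft {ι : Type*} {b : H} (𝓡 : Coalgebra.Repr k b ι)
    (f g : WithConv (H →ₗ[k] A)) :
    toConv ((f * g).ofConv ∘ₗ mulLeft k b) = ∑ i ∈ 𝓡.index,
      toConv (f.ofConv ∘ₗ mulLeft k (𝓡.left i)) *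
        toConv (g.ofConv ∘ₗ mulLeft k (𝓡.right i)) := by
  ext h
  simp [(𝓡.mul (ℛ k h)).convMul_apply, (ℛ k h).convMul_apply, Finset.sum_product]

lemma convOne_comp_mulLeft (b : H) :
    toConv ((1 : WithConv (H →ₗ[k] A)).ofConv ∘ₗ mulLeft k b) =
      counit (R := k) b • 1 := by
  ext h
  simp [Algebra.smul_def]

end Bialgebra

lemma exists_comp_eq_of_ker_le {R M N P : Type*} [Ring R] [AddCommGroup M] [Module R M]
    [AddCommGroup N] [Module R N] [AddCommGroup P] [Module R P] {π : M →ₗ[R] N}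
    (hπ : Function.Surjective π) {G : M →ₗ[R] P} (h : ker π ≤ ker G) :
    ∃ γ : N →ₗ[R] P, γ ∘ₗ π = G :=
  ⟨(ker π).liftQ G h ∘ₗ (π.quotKerEquivOfSurjective hπ).symm.toLinearMap, by
    ext m
    simp [Submodule.liftQ_apply]⟩

end LinearMap

namespace Subalgebra

variable {k H : Type*} [CommSemiring k] [Semiring H] [Bialgebra k H] (B : Subalgebra k H)

def IsLeftCoideal : Prop :=
  ∀ b : B, comul (b : H) ∈
    range (TensorProduct.map (LinearMap.id : H →ₗ[k] H) B.val.toLinearMap)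

variable {B}

lemma IsLeftCoideal.exists_repr_right_mem (hB : B.IsLeftCoideal) (b : B) :
    ∃ 𝓡 : Coalgebra.Repr k (b : H) (H × B), ∀ i, 𝓡.right i ∈ B := by
  obtain ⟨u, hu⟩ := hB b
  obtain ⟨s, rfl⟩ := TensorProduct.exists_finset u
  exact ⟨⟨s, Prod.fst, fun i ↦ i.2, by simpa [map_sum] using hu⟩, fun i ↦ i.2.2⟩

lemma IsLeftCoideal.comp_mulLeft_eq_counit_smul (hB : B.IsLeftCoideal)
    {p q F : WithConv (H →ₗ[k] H)} (hpq : p * q = 1)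
    (hq : ∀ c ∈ B, q.ofConv ∘ₗ mulLeft k c = mulLeft k c ∘ₗ q.ofConv)
    (hqF : ∀ c ∈ B, (q * F).ofConv ∘ₗ mulLeft k c = mulLeft k c ∘ₗ (q * F).ofConv) :
    ∀ b ∈ B, F.ofConv ∘ₗ mulLeft k b = counit (R := k) b • F.ofConv := by
  intro b hb
  obtain ⟨𝓡, h𝓡⟩ := hB.exists_repr_right_mem ⟨b, hb⟩
  have hterm : ∀ i, toConv ((q * F).ofConv ∘ₗ mulLeft k (𝓡.right i)) =
      toConv (q.ofConv ∘ₗ mulLeft k (𝓡.right i)) * F := fun i ↦ by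
    rw [hqF _ (h𝓡 i), mulLeft_comp_convMul, ← hq _ (h𝓡 i)]
  refine congrArg ofConv <| calc
    toConv (F.ofConv ∘ₗ mulLeft k b) = toConv ((p * (q * F)).ofConv ∘ₗ mulLeft k b) := by
        rw [← mul_assoc, hpq, one_mul]
    _ = toConv ((p * q).ofConv ∘ₗ mulLeft k b) * F := by
        simp_rw [convMul_comp_mulLeft 𝓡, hterm, ← mul_assoc, Finset.sum_mul]
    _ = counit (R := k) b • F := by
        rw [hpq, convOne_comp_mulLeft, smul_mul_assoc, one_mul]

lemma span_le_ker_of_comp_mulLeft {M : Type*} [AddCommMonoid M] [Module k M]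
    {G : H →ₗ[k] M} (hG : ∀ b ∈ B, G ∘ₗ mulLeft k b = counit (R := k) b • G) :
    Submodule.span k {z : H | ∃ b ∈ B, ∃ h : H, counit (R := k) b = 0 ∧ z = b * h} ≤
      ker G := by
  rw [Submodule.span_le]
  rintro _ ⟨b, hb, h, hεb, rfl⟩
  simpa [hεb] using congr($(hG b hb) h)

end Subalgebra

theorem stmt1 {k H C : Type*} [Field k] [Ring H] [HopfAlgebra k H]
    [AddCommGroup C] [Module k C] [Coalgebra k C]
    (B : Subalgebra k H)
    -- B is a left coideal subalgebra: Δ(B) ⊆ H ⊗ B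
    (hB : ∀ b : B, Coalgebra.comul (b : H) ∈
      LinearMap.range (TensorProduct.map (LinearMap.id : H →ₗ[k] H) B.val.toLinearMap))
    -- π : H → C is the quotient map onto H/B⁺H (a surjective coalgebra map
    -- whose kernel is B⁺H)
    (π : H →ₗ[k] C) (hπsurj : Function.Surjective π)
    (hπcounit : (Coalgebra.counit : C →ₗ[k] k) ∘ₗ π = Coalgebra.counit)
    (hπcomul : Coalgebra.comul ∘ₗ π = (TensorProduct.map π π) ∘ₗ Coalgebra.comul)
    (hπker : LinearMap.ker π = Submodule.span k
      {z : H | ∃ b ∈ B, ∃ h : H, Coalgebra.counit (R := k) b = 0 ∧ z = b * h})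
    (ζ ζbar : H →ₗ[k] B)
    (hζmod : ∀ (b : B) (h : H), ζ ((b : H) * h) = b * ζ h)
    (hinv₁ : convMap k ζ ζbar =
      (Algebra.linearMap k B) ∘ₗ (Coalgebra.counit : H →ₗ[k] k))
    (hinv₂ : convMap k ζbar ζ =
      (Algebra.linearMap k B) ∘ₗ (Coalgebra.counit : H →ₗ[k] k)) :
    -- γ̄∘π : h ↦ Σ S(h₍₁₎)·ι(ζ(h₍₂₎)) is well-defined on H/B⁺H:
    (∀ (b : B) (h : H),
      (LinearMap.mul' k H ∘ₗ
        TensorProduct.map (HopfAlgebra.antipode (R := k)) (B.val.toLinearMap ∘ₗ ζ) ∘ₗ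
        Coalgebra.comul) ((b : H) * h)
      = Coalgebra.counit (R := k) (b : H) •
        (LinearMap.mul' k H ∘ₗ
          TensorProduct.map (HopfAlgebra.antipode (R := k)) (B.val.toLinearMap ∘ₗ ζ) ∘ₗ
          Coalgebra.comul) h) ∧
    -- γ, γ̄ : H/B⁺H → H exist (factoring the above formulas through π) and are
    -- mutually convolution inverse: Σ γ(x₍₁₎)γ̄(x₍₂₎) = ε(x)1_H = Σ γ̄(x₍₁₎)γ(x₍₂₎)
    ∃ γ γbar : C →ₗ[k] H,
      γ ∘ₗ π = LinearMap.mul' k H ∘ₗ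
        TensorProduct.map (B.val.toLinearMap ∘ₗ ζbar) (LinearMap.id) ∘ₗ
        Coalgebra.comul ∧
      γbar ∘ₗ π = LinearMap.mul' k H ∘ₗ
        TensorProduct.map (HopfAlgebra.antipode (R := k)) (B.val.toLinearMap ∘ₗ ζ) ∘ₗ
        Coalgebra.comul ∧
      convMap k γ γbar = (Algebra.linearMap k H) ∘ₗ (Coalgebra.counit : C →ₗ[k] k) ∧
      convMap k γbar γ = (Algebra.linearMap k H) ∘ₗ (Coalgebra.counit : C →ₗ[k] k) := by
  have hcoideal : B.IsLeftCoideal := hB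
  set f := toConv (B.val.toLinearMap ∘ₗ ζ)
  set fbar := toConv (B.val.toLinearMap ∘ₗ ζbar)
  set S := toConv (HopfAlgebra.antipode k (A := H))
  set I := toConv (LinearMap.id : H →ₗ[k] H)
  have hS_I : S * I = 1 := antipode_mul_id
  have hI_S : I * S = 1 := id_mul_antipode
  have hf_fbar : f * fbar = 1 := algHom_comp_convMul_eq_one B.val (congrArg toConv hinv₁)
  have hfbar_f : fbar * f = 1 := algHom_comp_convMul_eq_one B.val (congrArg toConv hinv₂)
  have hf : ∀ c ∈ B, f.ofConv ∘ₗ mulLeft k c = mulLeft k c ∘ₗ f.ofConv := by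
    intro c hc
    ext z
    simp [f, hζmod ⟨c, hc⟩ z]
  have hγbar := hcoideal.comp_mulLeft_eq_counit_smul (F := S * f) hS_I (fun c _ ↦ rfl)
    (by rwa [← mul_assoc, hI_S, one_mul])
  have hγ := hcoideal.comp_mulLeft_eq_counit_smul (F := fbar * I) hfbar_f hf
    (by rw [← mul_assoc, hf_fbar, one_mul]; exact fun c _ ↦ rfl)
  obtain ⟨γ, hγπ⟩ := exists_comp_eq_of_ker_le hπsurj
    (hπker ▸ B.span_le_ker_of_comp_mulLeft hγ)
  obtain ⟨γbar, hγbarπ⟩ := exists_comp_eq_of_ker_le hπsurj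
    (hπker ▸ B.span_le_ker_of_comp_mulLeft hγbar)
  let πc : H →ₗc[k] C := { π with counit_comp := hπcounit, map_comp_comul := hπcomul.symm }
  refine ⟨fun b h ↦ congr($(hγbar _ b.2) h), γ, γbar, hγπ, hγbarπ, ?_, ?_⟩
  · refine congrArg ofConv (convMul_eq_one_of_comp_coalgHom πc hπsurj ?_)
    change toConv (γ ∘ₗ π) * toConv (γbar ∘ₗ π) = 1
    rw [hγπ, hγbarπ, toConv_ofConv, toConv_ofConv, mul_assoc, ← mul_assoc I, hI_S, one_mul,
      hfbar_f]
  · refine congrArg ofConv (convMul_eq_one_of_comp_coalgHom πc hπsurj ?_)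
    change toConv (γbar ∘ₗ π) * toConv (γ ∘ₗ π) = 1
    rw [hγπ, hγbarπ, toConv_ofConv, toConv_ofConv, mul_assoc, ← mul_assoc f, hf_fbar, one_mul,
      hS_I]
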